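/- arXiv:2204.00383 — 2 statements merged into one kernel-verified Lean document; each statement's English description precedes it below -/
import Mathlib

section
/- A positive definite n×n real matrix M is a fixed point of the Cholesky LR iteration (i.e., LᵀL = M where M = LLᵀ is the Cholesky decomposition) if and only if M is diagonal. -/
open Matrix

/-- A lower triangular real matrix that is normal is diagonal (strictly lower part vanishes). -/
lemma lower_of_tri_normal {n : ℕ} (L : Matrix (Fin n) (Fin n) ℝ)
    (hL : ∀ i j : Fin n, i < j → L i j = 0)
    (h : Lᵀ * L = L * Lᵀ) : ∀ j k : Fin n, j < k → L k j = 0 := by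
  suffices H : ∀ N : ℕ, ∀ j : Fin n, (j : ℕ) = N → ∀ k, j < k → L k j = 0 by
    intro j
    exact H j j rfl
  intro N
  induction N using Nat.strongRecOn with
  | ind N IH =>
    intro j hj
    have ih : ∀ m : Fin n, m < j → ∀ k, m < k → L k m = 0 := fun m hm =>
      IH (↑m) (by rw [← hj]; exact hm) m rfl
    intro k hjk
    have hd : ∑ m, L j m * L j m = ∑ m, L m j * L m j := by
      have := congrFun (congrFun h j) j
      simpa [Matrix.mul_apply, Matrix.transpose_apply] using this.symm
    have hleft : ∑ m, L j m * L j m = L j j * L j j := by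
      apply Finset.sum_eq_single
      · intro m _ hm
        rcases lt_or_gt_of_ne hm with hlt | hgt
        · rw [ih m hlt j hlt, mul_zero]
        · rw [hL j m hgt, mul_zero]
      · simp
    have hsplit : ∑ m ∈ Finset.univ.erase j, L m j * L m j = 0 := by
      have := Finset.sum_erase_add Finset.univ (fun m => L m j * L m j)
        (Finset.mem_univ j)
      have h2 : ∑ m ∈ Finset.univ.erase j, L m j * L m j + L j j * L j j
          = L j j * L j j := by rw [this, ← hd, hleft]
      linarith
    have hk : L k j * L k j = 0 := by
      have := (Finset.sum_eq_zero_iff_of_nonneg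
        (fun m _ => mul_self_nonneg (L m j))).mp hsplit k
      exact this (Finset.mem_erase.mpr ⟨Fin.ne_of_gt hjk, Finset.mem_univ k⟩)
    exact mul_self_eq_zero.mp hk

/-- If L is lower triangular with positive diagonal and L * Lᵀ is diagonal,
then L is diagonal. -/
lemma lower_of_tri_diag {n : ℕ} (L : Matrix (Fin n) (Fin n) ℝ)
    (hL : ∀ i j : Fin n, i < j → L i j = 0)
    (hLd : ∀ i : Fin n, 0 < L i i)
    (hdiag : (L * Lᵀ).IsDiag) : ∀ j k : Fin n, j < k → L k j = 0 := by
  suffices H : ∀ N : ℕ, ∀ j : Fin n, (j : ℕ) = N → ∀ k, j < k → L k j = 0 by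
    intro j
    exact H j j rfl
  intro N
  induction N using Nat.strongRecOn with
  | ind N IH =>
    intro j hj
    have ih : ∀ m : Fin n, m < j → ∀ k, m < k → L k m = 0 := fun m hm =>
      IH (↑m) (by rw [← hj]; exact hm) m rfl
    intro k hjk
    have h0 : (L * Lᵀ) k j = 0 := hdiag (Fin.ne_of_gt hjk)
    have hsum : ∑ m, L k m * L j m = 0 := by
      simpa [Matrix.mul_apply, Matrix.transpose_apply] using h0
    have hone : ∑ m, L k m * L j m = L k j * L j j := by
      apply Finset.sum_eq_single
      · intro m _ hm
        rcases lt_or_gt_of_ne hm with hlt | hgt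
        · rw [ih m hlt j hlt, mul_zero]
        · rw [hL j m hgt, mul_zero]
      · simp
    have : L k j * L j j = 0 := by rw [← hone]; exact hsum
    rcases mul_eq_zero.mp this with h | h
    · exact h
    · exact absurd h (ne_of_gt (hLd j))

theorem lr_fixed_point_iff_diagonal (n : ℕ)
    (M L : Matrix (Fin n) (Fin n) ℝ)
    (hM : M.PosDef)
    (hL : ∀ i j : Fin n, i < j → L i j = 0)
    (hLd : ∀ i : Fin n, 0 < L i i)
    (hChol : M = L * Lᵀ) :
    Lᵀ * L = M ↔ M.IsDiag := by
  constructor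
  · intro h
    have hlow : ∀ j k : Fin n, j < k → L k j = 0 :=
      lower_of_tri_normal L hL (by rw [h, hChol])
    intro i j hij
    rw [hChol, Matrix.mul_apply]
    apply Finset.sum_eq_zero
    intro m _
    rcases lt_trichotomy i m with hlt | heq | hgt
    · rw [hL i m hlt, zero_mul]
    · subst heq
      rcases lt_or_gt_of_ne hij with hlt | hgt
      · rw [Matrix.transpose_apply, hlow i j hlt]; ring
      · rw [Matrix.transpose_apply, hL j i hgt]; ring
    · rw [hlow m i hgt, zero_mul]
  · intro h
    have hlow : ∀ j k : Fin n, j < k → L k j = 0 := by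
      apply lower_of_tri_diag L hL hLd
      rw [← hChol]; exact h
    have hLt : Lᵀ = L := by
      ext i j
      rw [Matrix.transpose_apply]
      rcases lt_trichotomy i j with hlt | heq | hgt
      · rw [hL i j hlt, hlow i j hlt]
      · rw [heq]
      · rw [hL j i hgt, hlow j i hgt]
    rw [hChol, hLt]
end

section
/- The map M ↦ {Mv : ‖v‖ = 1} is injective on positive definite n×n real matrices: if P and Q are positive definite and {Pv : ‖v‖=1} = {Qv : ‖v‖=1} as subsets of ℝⁿ, then P = Q. -/
open Matrix

/-- A symmetric real matrix whose quadratic form agrees with that of the identity is `1`. -/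
lemma quad_form_eq_one {n : ℕ} (A : Matrix (Fin n) (Fin n) ℝ) (hsym : Aᵀ = A)
    (h : ∀ x : Fin n → ℝ, x ⬝ᵥ A.mulVec x = x ⬝ᵥ x) : A = 1 := by
  have key : ∀ x y : Fin n → ℝ, x ⬝ᵥ A.mulVec y = x ⬝ᵥ y := by
    intro x y
    have hxy := h (x + y)
    have hx := h x
    have hy := h y
    have hswap : y ⬝ᵥ A.mulVec x = x ⬝ᵥ A.mulVec y := by
      calc y ⬝ᵥ A.mulVec x = (y ᵥ* A) ⬝ᵥ x := dotProduct_mulVec _ _ _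
        _ = (y ᵥ* Aᵀ) ⬝ᵥ x := by rw [hsym]
        _ = (A.mulVec y) ⬝ᵥ x := by rw [vecMul_transpose]
        _ = x ⬝ᵥ A.mulVec y := dotProduct_comm _ _
    simp only [add_dotProduct, dotProduct_add, mulVec_add] at hxy
    rw [hswap, dotProduct_comm y x] at hxy
    linarith
  ext i j
  have := key (Pi.single i 1) (Pi.single j 1)
  simpa [mulVec_single, single_dotProduct, dotProduct_single, one_apply,
    Pi.single_apply, eq_comm] using this

theorem ellipsoid_map_injective (n : ℕ)
    (P Q : Matrix (Fin n) (Fin n) ℝ)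
    (hP : P.PosDef) (hQ : Q.PosDef)
    (h : {w : Fin n → ℝ | ∃ v : Fin n → ℝ, v ⬝ᵥ v = 1 ∧ w = P.mulVec v} =
         {w : Fin n → ℝ | ∃ v : Fin n → ℝ, v ⬝ᵥ v = 1 ∧ w = Q.mulVec v}) :
    P = Q := by
  have hQdet : IsUnit Q.det := isUnit_iff_ne_zero.mpr hQ.det_pos.ne'
  have hQinvQ : Q⁻¹ * Q = 1 := Q.nonsing_inv_mul hQdet
  have hQQinv : Q * Q⁻¹ = 1 := Q.mul_nonsing_inv hQdet
  have hPT : Pᵀ = P := hP.1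
  have hQT : Qᵀ = Q := hQ.1
  have hTrans : (Q⁻¹ * P)ᵀ = P * Q⁻¹ := by
    rw [Matrix.transpose_mul, Matrix.transpose_nonsing_inv, hPT, hQT]
  -- general fact: quadratic form of Aᵀ * A
  have hform : ∀ (A : Matrix (Fin n) (Fin n) ℝ) (w : Fin n → ℝ),
      w ⬝ᵥ (Aᵀ * A).mulVec w = (A.mulVec w) ⬝ᵥ (A.mulVec w) := by
    intro A w
    rw [← Matrix.mulVec_mulVec, dotProduct_mulVec, vecMul_transpose, dotProduct_comm,
      dotProduct_comm (A.mulVec w)]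
  -- key quadratic identity
  have key : ∀ x : Fin n → ℝ, x ⬝ᵥ ((Q⁻¹ * P)ᵀ * (Q⁻¹ * P)).mulVec x = x ⬝ᵥ x := by
    intro x
    rcases eq_or_ne x 0 with rfl | hx
    · simp
    · have hxx : (0 : ℝ) < x ⬝ᵥ x := by
        have h1 : 0 ≤ x ⬝ᵥ x := Finset.sum_nonneg fun i _ => mul_self_nonneg _
        have h2 : x ⬝ᵥ x ≠ 0 := fun hc => hx ((dotProduct_self_eq_zero (v := x)).mp hc)
        exact lt_of_le_of_ne h1 (Ne.symm h2)
      have hrpos : 0 < Real.sqrt (x ⬝ᵥ x) := Real.sqrt_pos.mpr hxx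
      have hvv : ((Real.sqrt (x ⬝ᵥ x))⁻¹ • x) ⬝ᵥ ((Real.sqrt (x ⬝ᵥ x))⁻¹ • x) = 1 := by
        rw [smul_dotProduct, dotProduct_smul, smul_smul, smul_eq_mul,
          ← Real.sqrt_inv, ← Real.sqrt_mul_self (inv_nonneg.mpr hxx.le)]
        field_simp
        rw [Real.sq_sqrt (Real.sqrt_nonneg _), one_div, ← inv_pow, Real.sqrt_sq (by positivity),
          mul_inv_cancel₀ hxx.ne']
      have hmem : P.mulVec ((Real.sqrt (x ⬝ᵥ x))⁻¹ • x) ∈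
          {w : Fin n → ℝ | ∃ v : Fin n → ℝ, v ⬝ᵥ v = 1 ∧ w = P.mulVec v} :=
        ⟨_, hvv, rfl⟩
      rw [h] at hmem
      obtain ⟨u, huu, hu⟩ := hmem
      have hQinvP : (Q⁻¹ * P).mulVec ((Real.sqrt (x ⬝ᵥ x))⁻¹ • x) = u := by
        rw [← Matrix.mulVec_mulVec, hu, Matrix.mulVec_mulVec, hQinvQ, Matrix.one_mulVec]
      have hquad : ((Real.sqrt (x ⬝ᵥ x))⁻¹ • x) ⬝ᵥ
          ((Q⁻¹ * P)ᵀ * (Q⁻¹ * P)).mulVec ((Real.sqrt (x ⬝ᵥ x))⁻¹ • x) = 1 := by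
        rw [hform, hQinvP]; exact huu
      have hscale : x = Real.sqrt (x ⬝ᵥ x) • ((Real.sqrt (x ⬝ᵥ x))⁻¹ • x) := by
        rw [smul_smul, mul_inv_cancel₀ hrpos.ne', one_smul]
      have ha : (Real.sqrt (x ⬝ᵥ x))⁻¹ ≠ 0 := inv_ne_zero hrpos.ne'
      simp only [smul_dotProduct, dotProduct_smul, mulVec_smul, smul_eq_mul] at hquad hvv
      exact mul_left_cancel₀ ha (mul_left_cancel₀ ha (hquad.trans hvv.symm))
  have hone : (Q⁻¹ * P)ᵀ * (Q⁻¹ * P) = 1 := by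
    apply quad_form_eq_one _ _ key
    rw [Matrix.transpose_mul, Matrix.transpose_transpose, hTrans]
  rw [hTrans] at hone
  have hone' : (Q⁻¹ * P) * (P * Q⁻¹) = 1 := mul_eq_one_comm.mp hone
  have hsq : P * P = Q * Q := by
    calc P * P = (Q * Q⁻¹) * P * (P * (Q⁻¹ * Q)) := by rw [hQQinv, hQinvQ, one_mul, mul_one]
      _ = Q * ((Q⁻¹ * P) * (P * Q⁻¹)) * Q := by simp only [Matrix.mul_assoc]
      _ = Q * Q := by rw [hone', mul_one]
  exact (open MatrixOrder in (CFC.sq_eq_sq_iff P Q hP.posSemidef.nonneg hQ.posSemidef.nonneg).mp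
    (by rw [sq, sq]; exact hsq))
end
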